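/- arXiv:2111.03782 — 2 statements merged into one kernel-verified Lean document; each statement's English description precedes it below -/
import Mathlib

section
/- Let M1, M2 be random variables with values in [0,1], let w1, w2 ≥ 0 with w1 + w2 = 1, set M_C := w1·M1 + w2·M2, let A1, A2 be events and e1, e2 ≥ 0. Assume: MCE(M1, A1) ≤ e1 and MCE(M2, A2) ≤ e2; and the conditional independences A1 ⟂ A2 | M_C, A1 ⟂ M_C | M1, and A2 ⟂ M_C | M2 hold. Then the expected calibration error of the weighted-average composition with respect to the conjunction satisfies ECE(w1·M1 + w2·M2, A1 ∩ A2) = E[ |P(A1 ∩ A2 | σ(M_C)) − M_C| ] ≤ max( e1 + e2 + e1·e2 , max(w1, w2) + e1 + e2 − e1·e2 ). -/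
open MeasureTheory ProbabilityTheory
open scoped ENNReal

/-- The sigma-algebra generated by a random variable. -/
def sigGen {Ω α : Type*} [MeasurableSpace α] (M : Ω → α) : MeasurableSpace Ω :=
  MeasurableSpace.comap M inferInstance

/-- Conditional probability of an event given a sub-sigma-algebra, as a random variable:
`P(A | 𝒢) = E[1_A | 𝒢]`. -/
noncomputable def cprob {Ω : Type*} [MeasurableSpace Ω] (μ : Measure Ω)
    (m : MeasurableSpace Ω) (A : Set Ω) : Ω → ℝ :=
  μ[A.indicator (fun _ => (1 : ℝ)) | m]

/-!
Write `p, q` for `P(A₁ | M_C), P(A₂ | M_C)` and `a, b` for `E[M₁ | M_C], E[M₂ | M_C]`.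
Conditioning on the coarser `σ(M_C)` preserves calibration: `A₁ ⟂ M_C | M₁` and the tower
property give `p = E[P(A₁ | M₁) | M_C]`, so `|p - a| ≤ e₁`, and likewise `|q - b| ≤ e₂`. Since
`M_C` is `σ(M_C)`-measurable, `M_C = w₁ a + w₂ b`, while `A₁ ⟂ A₂ | M_C` gives
`P(A₁ ∩ A₂ | M_C) = p q`. It remains to bound `|p q - (w₁ a + w₂ b)|` pointwise: the bilinear
part `p q - w₁ p - w₂ q` is at most `max w₁ w₂` in size and the errors add `w₁ e₁ + w₂ e₂`, which
is at most `e₁ + e₂ - e₁ e₂` when `e₁, e₂ ≤ 1`; otherwise `e₁ + e₂ + e₁ e₂ ≥ 1` and the trivial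
bound suffices.
-/

lemma abs_mul_sub_mul_sub_mul_le_max {p q w₁ w₂ : ℝ} (hp : p ∈ Set.Icc (0 : ℝ) 1)
    (hq : q ∈ Set.Icc (0 : ℝ) 1) (hw₁ : 0 ≤ w₁) (hw₂ : 0 ≤ w₂) (hw : w₁ + w₂ = 1) :
    |p * q - w₁ * p - w₂ * q| ≤ max w₁ w₂ := by
  obtain ⟨hp0, hp1⟩ := hp
  obtain ⟨hq0, hq1⟩ := hq
  rw [abs_le]
  rcases le_total w₁ w₂ with h | h
  all_goals
    simp only [max_eq_left, max_eq_right, h]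
    constructor <;>
      nlinarith [mul_nonneg hp0 hq0, mul_nonneg (sub_nonneg.2 hp1) (sub_nonneg.2 hq1),
        mul_nonneg hw₁ hp0, mul_nonneg hw₂ hq0, mul_nonneg hw₂ hp0, mul_nonneg hw₁ hq0]

lemma mul_add_mul_le_add_sub_mul {w₁ w₂ e₁ e₂ : ℝ} (hw₁ : 0 ≤ w₁) (hw₂ : 0 ≤ w₂)
    (hw : w₁ + w₂ = 1) (he₁ : e₁ ∈ Set.Icc (0 : ℝ) 1) (he₂ : e₂ ∈ Set.Icc (0 : ℝ) 1) :
    w₁ * e₁ + w₂ * e₂ ≤ e₁ + e₂ - e₁ * e₂ := by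
  obtain rfl : w₂ = 1 - w₁ := by linarith
  nlinarith [mul_nonneg hw₁ (mul_nonneg he₂.1 (sub_nonneg.2 he₁.2)),
    mul_nonneg hw₂ (mul_nonneg he₁.1 (sub_nonneg.2 he₂.2))]

lemma abs_mul_sub_weighted_average_le {p q a b w₁ w₂ e₁ e₂ : ℝ}
    (hp : p ∈ Set.Icc (0 : ℝ) 1) (hq : q ∈ Set.Icc (0 : ℝ) 1)
    (ha : a ∈ Set.Icc (0 : ℝ) 1) (hb : b ∈ Set.Icc (0 : ℝ) 1)
    (hw₁ : 0 ≤ w₁) (hw₂ : 0 ≤ w₂) (hw : w₁ + w₂ = 1) (hpa : |p - a| ≤ e₁) (hqb : |q - b| ≤ e₂) :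
    |p * q - (w₁ * a + w₂ * b)| ≤ max (e₁ + e₂ + e₁ * e₂) (max w₁ w₂ + e₁ + e₂ - e₁ * e₂) := by
  have he₁ : 0 ≤ e₁ := (abs_nonneg _).trans hpa
  have he₂ : 0 ≤ e₂ := (abs_nonneg _).trans hqb
  by_cases hsmall : e₁ ≤ 1 ∧ e₂ ≤ 1
  · refine le_max_of_le_right ?_
    have hmix : |w₁ * (p - a) + w₂ * (q - b)| ≤ w₁ * e₁ + w₂ * e₂ :=
      calc |w₁ * (p - a) + w₂ * (q - b)| ≤ |w₁ * (p - a)| + |w₂ * (q - b)| := abs_add_le _ _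
        _ = w₁ * |p - a| + w₂ * |q - b| := by
          rw [abs_mul, abs_mul, abs_of_nonneg hw₁, abs_of_nonneg hw₂]
        _ ≤ w₁ * e₁ + w₂ * e₂ := by gcongr
    calc |p * q - (w₁ * a + w₂ * b)|
        = |(p * q - w₁ * p - w₂ * q) + (w₁ * (p - a) + w₂ * (q - b))| := by ring_nf
      _ ≤ |p * q - w₁ * p - w₂ * q| + |w₁ * (p - a) + w₂ * (q - b)| := abs_add_le _ _
      _ ≤ max w₁ w₂ + (e₁ + e₂ - e₁ * e₂) := by
        gcongr
        · exact abs_mul_sub_mul_sub_mul_le_max hp hq hw₁ hw₂ hw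
        · exact hmix.trans <|
            mul_add_mul_le_add_sub_mul hw₁ hw₂ hw ⟨he₁, hsmall.1⟩ ⟨he₂, hsmall.2⟩
      _ = max w₁ w₂ + e₁ + e₂ - e₁ * e₂ := by ring
  · refine le_max_of_le_left ?_
    have hpq : p * q ∈ Set.Icc (0 : ℝ) 1 :=
      ⟨mul_nonneg hp.1 hq.1, mul_le_one₀ hp.2 hq.1 hq.2⟩
    have hab : w₁ * a + w₂ * b ∈ Set.Icc (0 : ℝ) 1 := convex_Icc 0 1 ha hb hw₁ hw₂ hw
    have hone : 1 ≤ e₁ + e₂ + e₁ * e₂ := by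
      rcases not_and_or.1 hsmall with h | h <;> nlinarith [mul_nonneg he₁ he₂]
    exact (abs_sub_le_of_nonneg_of_le hpq.1 hpq.2 hab.1 hab.2).trans hone

section CondExp

variable {Ω : Type*} {m m₀ : MeasurableSpace Ω} {μ : Measure Ω}

lemma sigGen_comp_le {α β : Type*} [MeasurableSpace α] [MeasurableSpace β] {X : Ω → α}
    {f : α → β} (hf : Measurable f) : sigGen (f ∘ X) ≤ sigGen X :=
  measurable_iff_comap_le.1 (hf.comp (comap_measurable X))

lemma condExp_sigGen_self [IsFiniteMeasure μ] {f : Ω → ℝ} (hf : Measurable f)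
    (hfi : Integrable f μ) : μ[f | sigGen f] = f :=
  condExp_of_stronglyMeasurable hf.comap_le (comap_measurable f).stronglyMeasurable hfi

lemma condExp_mem_Icc [IsFiniteMeasure μ] (hm : m ≤ m₀) {f : Ω → ℝ} {a b : ℝ}
    (hf : Integrable f μ) (hfab : ∀ᵐ ω ∂μ, f ω ∈ Set.Icc a b) :
    ∀ᵐ ω ∂μ, μ[f | m] ω ∈ Set.Icc a b := by
  have hlo : μ[fun _ => a | m] ≤ᵐ[μ] μ[f | m] :=
    condExp_mono (integrable_const a) hf (hfab.mono fun _ h => h.1)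
  have hhi : μ[f | m] ≤ᵐ[μ] μ[fun _ => b | m] :=
    condExp_mono hf (integrable_const b) (hfab.mono fun _ h => h.2)
  rw [condExp_const hm] at hlo hhi
  filter_upwards [hlo, hhi] with ω using And.intro

lemma cprob_mem_Icc [IsFiniteMeasure μ] (hm : m ≤ m₀) {A : Set Ω}
    (hA : MeasurableSet A) : ∀ᵐ ω ∂μ, cprob μ m A ω ∈ Set.Icc (0 : ℝ) 1 :=
  condExp_mem_Icc hm ((integrable_const 1).indicator hA) <| .of_forall fun ω => by
    by_cases h : ω ∈ A <;> simp [h]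

lemma abs_condExp_sub_condExp_le {f g : Ω → ℝ} {e : ℝ} (hf : Integrable f μ)
    (hg : Integrable g μ) (hfg : ∀ᵐ ω ∂μ, |f ω - g ω| ≤ e) :
    ∀ᵐ ω ∂μ, |μ[f | m] ω - μ[g | m] ω| ≤ e := by
  filter_upwards [condExp_sub hf hg m, ae_bdd_abs_condExp_of_ae_bdd_abs (m := m) (f := f - g) hfg]
    with ω hsub hbdd
  rwa [hsub] at hbdd

lemma condExp_smul_add_smul {f g : Ω → ℝ} (hf : Integrable f μ) (hg : Integrable g μ)
    (c d : ℝ) :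
    μ[c • f + d • g | m] =ᵐ[μ] c • μ[f | m] + d • μ[g | m] :=
  (condExp_add (hf.smul c) (hg.smul d) m).trans ((condExp_smul c f m).add (condExp_smul d g m))

lemma abs_cprob_sub_condExp_le_of_condIndep [IsFiniteMeasure μ] {M N : Ω → ℝ} {A : Set Ω}
    {e : ℝ} (hM : Measurable M) (hN : Measurable N) (hMint : Integrable M μ)
    (hcal : ∀ᵐ ω ∂μ, |cprob μ (sigGen M) A ω - M ω| ≤ e)
    (hCI : cprob μ (sigGen fun ω => (M ω, N ω)) A =ᵐ[μ] cprob μ (sigGen M) A) :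
    ∀ᵐ ω ∂μ, |cprob μ (sigGen N) A ω - μ[M | sigGen N] ω| ≤ e := by
  have hle : sigGen N ≤ sigGen fun ω => (M ω, N ω) :=
    sigGen_comp_le (X := fun ω => (M ω, N ω)) measurable_snd
  have hpair : sigGen (fun ω => (M ω, N ω)) ≤ m₀ := (hM.prodMk hN).comap_le
  have htower : cprob μ (sigGen N) A =ᵐ[μ] μ[cprob μ (sigGen M) A | sigGen N] :=
    (condExp_condExp_of_le hle hpair).symm.trans (condExp_congr_ae hCI)
  filter_upwards [htower, abs_condExp_sub_condExp_le integrable_condExp hMint hcal]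
    with ω hpω hbound
  rwa [hpω]

end CondExp

theorem ece_weighted_average_bound_general
    {Ω : Type*} [MeasurableSpace Ω] (μ : Measure Ω) [IsProbabilityMeasure μ]
    (M1 M2 MC : Ω → ℝ) (hM1 : Measurable M1) (hM2 : Measurable M2)
    (hM1r : ∀ ω, M1 ω ∈ Set.Icc (0 : ℝ) 1) (hM2r : ∀ ω, M2 ω ∈ Set.Icc (0 : ℝ) 1)
    (w1 w2 : ℝ) (hw1 : 0 ≤ w1) (hw2 : 0 ≤ w2) (hw : w1 + w2 = 1)
    (hMCdef : MC = fun ω => w1 * M1 ω + w2 * M2 ω)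
    (A1 A2 : Set Ω) (hA1 : MeasurableSet A1) (hA2 : MeasurableSet A2)
    (e1 e2 : ℝ)
    (hMCE1 : ∀ᵐ ω ∂μ, |cprob μ (sigGen M1) A1 ω - M1 ω| ≤ e1)
    (hMCE2 : ∀ᵐ ω ∂μ, |cprob μ (sigGen M2) A2 ω - M2 ω| ≤ e2)
    (hCIA : cprob μ (sigGen MC) (A1 ∩ A2) =ᵐ[μ]
      fun ω => cprob μ (sigGen MC) A1 ω * cprob μ (sigGen MC) A2 ω)
    (hCI1 : cprob μ (sigGen (fun ω => (M1 ω, MC ω))) A1 =ᵐ[μ] cprob μ (sigGen M1) A1)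
    (hCI2 : cprob μ (sigGen (fun ω => (M2 ω, MC ω))) A2 =ᵐ[μ] cprob μ (sigGen M2) A2) :
    ∫ ω, |cprob μ (sigGen MC) (A1 ∩ A2) ω - MC ω| ∂μ ≤
      max (e1 + e2 + e1 * e2) (max w1 w2 + e1 + e2 - e1 * e2) := by
  have hint1 : Integrable M1 μ := .of_mem_Icc 0 1 hM1.aemeasurable (.of_forall hM1r)
  have hint2 : Integrable M2 μ := .of_mem_Icc 0 1 hM2.aemeasurable (.of_forall hM2r)
  have hMC : Measurable MC := hMCdef ▸ (hM1.const_mul w1).add (hM2.const_mul w2)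
  have hm : sigGen MC ≤ _ := hMC.comap_le
  have hMCr : ∀ ω, MC ω ∈ Set.Icc (0 : ℝ) 1 :=
    fun ω => hMCdef ▸ convex_Icc 0 1 (hM1r ω) (hM2r ω) hw1 hw2 hw
  have hMCint : Integrable MC μ := .of_mem_Icc 0 1 hMC.aemeasurable (.of_forall hMCr)
  have hMCavg : MC =ᵐ[μ] w1 • μ[M1 | sigGen MC] + w2 • μ[M2 | sigGen MC] := by
    have hMCsum : MC = w1 • M1 + w2 • M2 := by rw [hMCdef]; rfl
    calc MC = μ[MC | sigGen MC] := (condExp_sigGen_self hMC hMCint).symm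
      _ = μ[w1 • M1 + w2 • M2 | sigGen MC] := congrArg (μ[· | sigGen MC]) hMCsum
      _ =ᵐ[μ] _ := condExp_smul_add_smul hint1 hint2 w1 w2
  have hpt : ∀ᵐ ω ∂μ, |cprob μ (sigGen MC) (A1 ∩ A2) ω - MC ω| ≤
      max (e1 + e2 + e1 * e2) (max w1 w2 + e1 + e2 - e1 * e2) := by
    filter_upwards [hCIA, hMCavg, cprob_mem_Icc hm hA1, cprob_mem_Icc hm hA2,
      condExp_mem_Icc hm hint1 (.of_forall hM1r), condExp_mem_Icc hm hint2 (.of_forall hM2r),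
      abs_cprob_sub_condExp_le_of_condIndep hM1 hMC hint1 hMCE1 hCI1,
      abs_cprob_sub_condExp_le_of_condIndep hM2 hMC hint2 hMCE2 hCI2]
      with ω hpq havg hp hq ha hb hpa hqb
    rw [hpq, havg]
    exact abs_mul_sub_weighted_average_le hp hq ha hb hw1 hw2 hw hpa hqb
  calc ∫ ω, |cprob μ (sigGen MC) (A1 ∩ A2) ω - MC ω| ∂μ
      ≤ ∫ _, max (e1 + e2 + e1 * e2) (max w1 w2 + e1 + e2 - e1 * e2) ∂μ :=
        integral_mono_ae (integrable_condExp.sub hMCint).abs (integrable_const _) hpt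
    _ = max (e1 + e2 + e1 * e2) (max w1 w2 + e1 + e2 - e1 * e2) := by simp

/-- Theorem 4.3 (ECE bound for weighted-averaging composition):
`ECE(w1·M1 + w2·M2, A1 ∧ A2) ≤ max(e1 + e2 + e1·e2, max(w1, w2) + e1 + e2 − e1·e2)`. -/
theorem ece_weighted_average_bound
    {Ω : Type*} [MeasurableSpace Ω] (μ : Measure Ω) [IsProbabilityMeasure μ]
    (M1 M2 MC : Ω → ℝ) (hM1 : Measurable M1) (hM2 : Measurable M2)
    (hM1r : ∀ ω, M1 ω ∈ Set.Icc (0 : ℝ) 1) (hM2r : ∀ ω, M2 ω ∈ Set.Icc (0 : ℝ) 1)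
    (w1 w2 : ℝ) (hw1 : 0 ≤ w1) (hw2 : 0 ≤ w2) (hw : w1 + w2 = 1)
    (hMCdef : MC = fun ω => w1 * M1 ω + w2 * M2 ω)
    (A1 A2 : Set Ω) (hA1 : MeasurableSet A1) (hA2 : MeasurableSet A2)
    (e1 e2 : ℝ) (he1 : 0 ≤ e1) (he2 : 0 ≤ e2)
    (hMCE1 : ∀ᵐ ω ∂μ, |cprob μ (sigGen M1) A1 ω - M1 ω| ≤ e1)
    (hMCE2 : ∀ᵐ ω ∂μ, |cprob μ (sigGen M2) A2 ω - M2 ω| ≤ e2)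
    (hCIA : cprob μ (sigGen MC) (A1 ∩ A2) =ᵐ[μ]
      fun ω => cprob μ (sigGen MC) A1 ω * cprob μ (sigGen MC) A2 ω)
    (hCI1 : cprob μ (sigGen (fun ω => (M1 ω, MC ω))) A1 =ᵐ[μ] cprob μ (sigGen M1) A1)
    (hCI2 : cprob μ (sigGen (fun ω => (M2 ω, MC ω))) A2 =ᵐ[μ] cprob μ (sigGen M2) A2) :
    ∫ ω, |cprob μ (sigGen MC) (A1 ∩ A2) ω - MC ω| ∂μ ≤
      max (e1 + e2 + e1 * e2) (max w1 w2 + e1 + e2 - e1 * e2) :=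
  ece_weighted_average_bound_general μ M1 M2 MC hM1 hM2 hM1r hM2r w1 w2 hw1 hw2 hw hMCdef A1 A2 hA1
    hA2 e1 e2 hMCE1 hMCE2 hCIA hCI1 hCI2
end

section
/- Let M1, M2 be random variables with values in [0,1], set M_C := M1 · M2, let A1, A2 be events and e1, e2 ≥ 0. Assume: MCE(M1, A1) ≤ e1 and MCE(M2, A2) ≤ e2; and the conditional independences A1 ⟂ A2 | M_C, A1 ⟂ M_C | M1, and A2 ⟂ M_C | M2 hold. Then almost surely P(A1 ∩ A2 | σ(M_C)) ≥ max(0, M_C − e1) · max(0, M_C − e2). -/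
open MeasureTheory ProbabilityTheory
open scoped ENNReal

/-! Each monitor is conservative for the composite one: since `M_C ≤ M_i`, the calibration bound
`P(A_i | σ(M_i)) ≥ M_i - e_i` gives `P(A_i | σ(M_i)) ≥ M_C - e_i`, and the conditional independence
`A_i ⟂ M_C | M_i` lets the tower property carry this bound down to
`P(A_i | σ(M_C)) ≥ M_C - e_i`. Multiplying the two bounds, using `A_1 ⟂ A_2 | M_C`, gives the
theorem. -/

section

variable {Ω : Type*} {m m₀ : MeasurableSpace Ω} {μ : Measure Ω}

theorem ae_le_condExp_of_stronglyMeasurable (hm : m ≤ m₀) [SigmaFinite (μ.trim hm)]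
    {X Y : Ω → ℝ} (hX : StronglyMeasurable[m] X) (hXi : Integrable X μ) (hYi : Integrable Y μ)
    (hXY : X ≤ᵐ[μ] Y) : X ≤ᵐ[μ] μ[Y | m] :=
  calc X = μ[X | m] := (condExp_of_stronglyMeasurable hm hX hXi).symm
    _ ≤ᵐ[μ] μ[Y | m] := condExp_mono hXi hYi hXY

theorem cprob_nonneg (A : Set Ω) : 0 ≤ᵐ[μ] cprob μ m A :=
  condExp_nonneg (ae_of_all _ (Set.indicator_nonneg fun _ _ => zero_le_one))

end

theorem sigGen_le_sigGen_prodMk {Ω α β : Type*} [MeasurableSpace α] [MeasurableSpace β]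
    (f : Ω → α) (g : Ω → β) : sigGen g ≤ sigGen (fun ω => (f ω, g ω)) :=
  (MeasurableSpace.comap_comp (f := Prod.snd) (g := fun ω => (f ω, g ω))).symm.trans_le
    (MeasurableSpace.comap_mono measurable_snd.comap_le)

theorem ae_max_sub_le_cprob_sigGen_of_le {Ω : Type*} [MeasurableSpace Ω] {μ : Measure Ω}
    [IsFiniteMeasure μ] {M N : Ω → ℝ} (hM : Measurable M) (hN : Measurable N)
    (hNi : Integrable N μ) (hNM : ∀ᵐ ω ∂μ, N ω ≤ M ω) {A : Set Ω} {e : ℝ}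
    (hMCE : ∀ᵐ ω ∂μ, |cprob μ (sigGen M) A ω - M ω| ≤ e)
    (hCI : cprob μ (sigGen (fun ω => (M ω, N ω))) A =ᵐ[μ] cprob μ (sigGen M) A) :
    ∀ᵐ ω ∂μ, max 0 (N ω - e) ≤ cprob μ (sigGen N) A ω := by
  have hNm : sigGen N ≤ ‹MeasurableSpace Ω› := hN.comap_le
  have hNM_lb : (fun ω => N ω - e) ≤ᵐ[μ] cprob μ (sigGen M) A := by
    filter_upwards [hNM, hMCE] with ω hle habs
    linarith [(abs_le.mp habs).1]
  have hlb : (fun ω => N ω - e) ≤ᵐ[μ] μ[cprob μ (sigGen M) A | sigGen N] :=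
    ae_le_condExp_of_stronglyMeasurable hNm
      ((Measurable.of_comap_le le_rfl).sub_const e).stronglyMeasurable
      (hNi.sub (integrable_const e)) integrable_condExp hNM_lb
  have htower : μ[cprob μ (sigGen (fun ω => (M ω, N ω))) A | sigGen N] =ᵐ[μ]
      cprob μ (sigGen N) A :=
    have hpair : sigGen (fun ω => (M ω, N ω)) ≤ ‹MeasurableSpace Ω› := (hM.prodMk hN).comap_le
    condExp_condExp_of_le (sigGen_le_sigGen_prodMk M N) hpair
  filter_upwards [hlb, condExp_congr_ae (m := sigGen N) hCI, htower, cprob_nonneg A]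
    with ω hω hCIω htowerω hnonneg
  exact max_le hnonneg (by linarith)

theorem conservatism_product_bound_general
    {Ω : Type*} [MeasurableSpace Ω] (μ : Measure Ω) [IsProbabilityMeasure μ]
    (M1 M2 MC : Ω → ℝ) (hM1 : Measurable M1) (hM2 : Measurable M2)
    (hM1r : ∀ ω, M1 ω ∈ Set.Icc (0 : ℝ) 1) (hM2r : ∀ ω, M2 ω ∈ Set.Icc (0 : ℝ) 1)
    (hMCdef : MC = fun ω => M1 ω * M2 ω)
    (A1 A2 : Set Ω)
    (e1 e2 : ℝ)
    (hMCE1 : ∀ᵐ ω ∂μ, |cprob μ (sigGen M1) A1 ω - M1 ω| ≤ e1)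
    (hMCE2 : ∀ᵐ ω ∂μ, |cprob μ (sigGen M2) A2 ω - M2 ω| ≤ e2)
    (hCIA : cprob μ (sigGen MC) (A1 ∩ A2) =ᵐ[μ]
      fun ω => cprob μ (sigGen MC) A1 ω * cprob μ (sigGen MC) A2 ω)
    (hCI1 : cprob μ (sigGen (fun ω => (M1 ω, MC ω))) A1 =ᵐ[μ] cprob μ (sigGen M1) A1)
    (hCI2 : cprob μ (sigGen (fun ω => (M2 ω, MC ω))) A2 =ᵐ[μ] cprob μ (sigGen M2) A2) :
    ∀ᵐ ω ∂μ, max 0 (MC ω - e1) * max 0 (MC ω - e2) ≤ cprob μ (sigGen MC) (A1 ∩ A2) ω := by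
  have hMC : Measurable MC := hMCdef ▸ hM1.mul hM2
  have hMC_bounds : ∀ ω, 0 ≤ MC ω ∧ MC ω ≤ M1 ω ∧ MC ω ≤ M2 ω := fun ω => by
    obtain ⟨⟨h1₀, h1₁⟩, ⟨h2₀, h2₁⟩⟩ := And.intro (hM1r ω) (hM2r ω)
    subst hMCdef
    exact ⟨mul_nonneg h1₀ h2₀, mul_le_of_le_one_right h1₀ h2₁, mul_le_of_le_one_left h2₀ h1₁⟩
  have hMCi : Integrable MC μ := by
    refine .of_bound hMC.aestronglyMeasurable 1 (ae_of_all _ fun ω => ?_)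
    obtain ⟨h₀, h₁, -⟩ := hMC_bounds ω
    rw [Real.norm_eq_abs, abs_of_nonneg h₀]
    exact h₁.trans (hM1r ω).2
  filter_upwards [
    ae_max_sub_le_cprob_sigGen_of_le hM1 hMC hMCi (ae_of_all _ fun ω => (hMC_bounds ω).2.1)
      hMCE1 hCI1,
    ae_max_sub_le_cprob_sigGen_of_le hM2 hMC hMCi (ae_of_all _ fun ω => (hMC_bounds ω).2.2)
      hMCE2 hCI2, hCIA] with ω h1 h2 hprod
  rw [hprod]
  exact mul_le_mul h1 h2 (le_max_left _ _) ((le_max_left _ _).trans h1)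

/-- Theorem 4.4 (Conservatism bound for product composition):
a.s. `P(A1 ∧ A2 | σ(M_C)) ≥ max(0, M_C − e1) · max(0, M_C − e2)`. -/
theorem conservatism_product_bound
    {Ω : Type*} [MeasurableSpace Ω] (μ : Measure Ω) [IsProbabilityMeasure μ]
    (M1 M2 MC : Ω → ℝ) (hM1 : Measurable M1) (hM2 : Measurable M2)
    (hM1r : ∀ ω, M1 ω ∈ Set.Icc (0 : ℝ) 1) (hM2r : ∀ ω, M2 ω ∈ Set.Icc (0 : ℝ) 1)
    (hMCdef : MC = fun ω => M1 ω * M2 ω)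
    (A1 A2 : Set Ω) (hA1 : MeasurableSet A1) (hA2 : MeasurableSet A2)
    (e1 e2 : ℝ) (he1 : 0 ≤ e1) (he2 : 0 ≤ e2)
    (hMCE1 : ∀ᵐ ω ∂μ, |cprob μ (sigGen M1) A1 ω - M1 ω| ≤ e1)
    (hMCE2 : ∀ᵐ ω ∂μ, |cprob μ (sigGen M2) A2 ω - M2 ω| ≤ e2)
    (hCIA : cprob μ (sigGen MC) (A1 ∩ A2) =ᵐ[μ]
      fun ω => cprob μ (sigGen MC) A1 ω * cprob μ (sigGen MC) A2 ω)
    (hCI1 : cprob μ (sigGen (fun ω => (M1 ω, MC ω))) A1 =ᵐ[μ] cprob μ (sigGen M1) A1)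
    (hCI2 : cprob μ (sigGen (fun ω => (M2 ω, MC ω))) A2 =ᵐ[μ] cprob μ (sigGen M2) A2) :
    ∀ᵐ ω ∂μ, max 0 (MC ω - e1) * max 0 (MC ω - e2) ≤ cprob μ (sigGen MC) (A1 ∩ A2) ω :=
  conservatism_product_bound_general μ M1 M2 MC hM1 hM2 hM1r hM2r hMCdef A1 A2 e1 e2 hMCE1 hMCE2
    hCIA hCI1 hCI2
end
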